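/- arXiv:2602.19192 — 8 statements merged into one kernel-verified Lean document; each statement's English description precedes it below -/
import Mathlib

section
/- Let γ ∈ (0,2). The function z ↦ (1 − cos z)·|z|^{−1−γ} is integrable on ℝ ∖ {0}, and for every ξ ∈ ℝ one has ∫_{ℝ} (1 − cos(ξ z))·|z|^{−1−γ} dz = |ξ|^γ · ∫_{ℝ} (1 − cos z)·|z|^{−1−γ} dz. -/
/-!
Near `0` the integrand is at most `z ^ 2 * |z| ^ (-1 - γ) = |z| ^ (1 - γ)`, integrable since
`γ < 2`; near infinity it is at most `2 * |z| ^ (-1 - γ)`, integrable since `γ > 0`.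
The scaling identity is the substitution `u = ξ z`, under which `|z| ^ (-1 - γ) dz` picks up the
factor `|ξ| ^ γ`.
-/

open MeasureTheory Set Real

theorem Function.Even.integrable_of_integrableOn_Ioi {E : Type*} [NormedAddCommGroup E]
    {f : ℝ → E} (heven : f.Even) (hf : IntegrableOn f (Ioi 0)) : Integrable f := by
  have hIic : IntegrableOn f (Iic 0) := by
    rw [← Measure.map_neg_eq_self (volume : Measure ℝ),
      (measurableEmbedding_neg (α := ℝ)).integrableOn_map_iff]
    simp only [neg_preimage, neg_Iic, neg_zero]
    rw [show f ∘ Neg.neg = f from funext heven]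
    exact (integrableOn_Ici_iff_integrableOn_Ioi).2 hf
  rw [← integrableOn_univ, ← Iic_union_Ioi (a := 0)]
  exact hIic.union hf

theorem integrableOn_Ioi_one_sub_cos_mul_rpow {γ : ℝ} (hγ0 : 0 < γ) (hγ2 : γ < 2) :
    IntegrableOn (fun z : ℝ => (1 - cos z) * z ^ (-1 - γ)) (Ioi 0) := by
  have hmeas : AEStronglyMeasurable (fun z : ℝ => (1 - cos z) * z ^ (-1 - γ)) :=
    (by fun_prop : Measurable fun z : ℝ => (1 - cos z) * z ^ (-1 - γ)).aestronglyMeasurable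
  have hnorm : ∀ z : ℝ, 0 < z → ‖(1 - cos z) * z ^ (-1 - γ)‖ = (1 - cos z) * z ^ (-1 - γ) :=
    fun z hz => norm_of_nonneg (mul_nonneg (sub_nonneg.2 (cos_le_one z)) (rpow_nonneg hz.le _))
  rw [← Ioc_union_Ioi_eq_Ioi zero_le_one]
  refine IntegrableOn.union ?_ ?_
  · have hdom : IntegrableOn (fun z : ℝ => z ^ (1 - γ)) (Ioc 0 1) :=
      (intervalIntegrable_iff_integrableOn_Ioc_of_le zero_le_one).1
        (intervalIntegral.intervalIntegrable_rpow' (by linarith))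
    refine hdom.mono' hmeas.restrict <| (ae_restrict_iff' measurableSet_Ioc).2 <|
      .of_forall fun z ⟨hz0, _⟩ => ?_
    calc ‖(1 - cos z) * z ^ (-1 - γ)‖ = (1 - cos z) * z ^ (-1 - γ) := hnorm z hz0
      _ ≤ z ^ (2 : ℝ) * z ^ (-1 - γ) := by
        rw [rpow_two]
        gcongr
        linarith [one_sub_sq_div_two_le_cos (x := z), sq_nonneg z]
      _ = z ^ (1 - γ) := by rw [← rpow_add hz0]; ring_nf
  · have hdom : IntegrableOn (fun z : ℝ => 2 * z ^ (-1 - γ)) (Ioi 1) :=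
      (integrableOn_Ioi_rpow_of_lt (by linarith) one_pos).const_mul 2
    refine hdom.mono' hmeas.restrict <| (ae_restrict_iff' measurableSet_Ioi).2 <|
      .of_forall fun z (hz : 1 < z) => ?_
    rw [hnorm z (one_pos.trans hz)]
    gcongr
    linarith [neg_one_le_cos z]

theorem integrable_one_sub_cos_mul_abs_rpow {γ : ℝ} (hγ0 : 0 < γ) (hγ2 : γ < 2) :
    Integrable (fun z : ℝ => (1 - cos z) * |z| ^ (-1 - γ)) := by
  refine Function.Even.integrable_of_integrableOn_Ioi (fun z => by simp only [cos_neg, abs_neg])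
    ?_
  refine (integrableOn_Ioi_one_sub_cos_mul_rpow hγ0 hγ2).congr_fun (fun z hz => ?_)
    measurableSet_Ioi
  rw [abs_of_pos (mem_Ioi.1 hz)]

theorem integral_comp_mul_left_mul_abs_rpow (f : ℝ → ℝ) (s : ℝ) {ξ : ℝ} (hξ : ξ ≠ 0) :
    ∫ z, f (ξ * z) * |z| ^ s = |ξ| ^ (-1 - s) * ∫ z, f z * |z| ^ s := by
  have hξ' : 0 < |ξ| := abs_pos.2 hξ
  have hrescale : ∀ z, f (ξ * z) * |z| ^ s = |ξ| ^ (-s) * (f (ξ * z) * |ξ * z| ^ s) := by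
    intro z
    rw [abs_mul, mul_rpow hξ'.le (abs_nonneg z), rpow_neg hξ'.le]
    field_simp
  simp_rw [hrescale]
  rw [integral_const_mul, Measure.integral_comp_mul_left (fun u => f u * |u| ^ s) ξ,
    smul_eq_mul, ← mul_assoc, abs_inv, ← rpow_neg_one, ← rpow_add hξ']
  ring_nf

/-- **Scaling form of the Lévy–Khintchine formula** for the symmetric γ-stable
Lévy measure `ν_γ(dz) = c_γ |z|^{-1-γ} dz`: the function
`z ↦ (1 - cos z) |z|^{-1-γ}` is integrable on `ℝ \ {0}`, and for every `ξ`,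
`∫ (1 - cos (ξ z)) |z|^{-1-γ} dz = |ξ|^γ ∫ (1 - cos z) |z|^{-1-γ} dz`. -/
theorem levy_khintchine_scaling (γ : ℝ) (hγ : γ ∈ Set.Ioo (0 : ℝ) 2) :
    IntegrableOn (fun z : ℝ => (1 - Real.cos z) * |z| ^ (-1 - γ)) {0}ᶜ volume ∧
    ∀ ξ : ℝ,
      (∫ z : ℝ, (1 - Real.cos (ξ * z)) * |z| ^ (-1 - γ))
        = |ξ| ^ γ * ∫ z : ℝ, (1 - Real.cos z) * |z| ^ (-1 - γ) := by
  refine ⟨(integrable_one_sub_cos_mul_abs_rpow hγ.1 hγ.2).integrableOn, fun ξ => ?_⟩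
  rcases eq_or_ne ξ 0 with rfl | hξ
  · simp [zero_rpow hγ.1.ne']
  · rw [integral_comp_mul_left_mul_abs_rpow (fun u => 1 - cos u) _ hξ]
    ring_nf
end

section
/- Let γ ∈ (0,2), N ≥ 1, and κ ∈ ℝ. The following are equivalent: (i) for every a : Fin N → ℂ and every x ∈ ℝ, ∑_{n,m=1}^{N} a_n·conj(a_m)·e^{i(n−m)x}·(Ψ_γ(n,m))² ≥ κ·∑_{n,m=1}^{N} a_n·conj(a_m)·e^{i(n−m)x}·Ψ_γ(n,m) (both sides being real since the kernels are real symmetric); (ii) for every v : Fin N → ℂ, ∑_{n,m=1}^{N} v_n·conj(v_m)·(R_H(n,m))² ≥ κ·∑_{n,m=1}^{N} v_n·conj(v_m)·R_H(n,m), where H = γ/2. That is, the Bakry–Émery curvature on positive-frequency trigonometric polynomials of degree ≤ N equals the smallest generalized eigenvalue of the pair (R_H^{∘2}, R_H). -/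
/-- The Fourier-space carré du champ kernel of the γ-stable generator. -/
noncomputable def Psi (γ ξ η : ℝ) : ℝ :=
  (1 / 2) * (|ξ| ^ γ + |η| ^ γ - |ξ - η| ^ γ)

/-- The covariance kernel of fractional Brownian motion with Hurst parameter `H`. -/
noncomputable def fbmCov (H s t : ℝ) : ℝ :=
  (1 / 2) * (|s| ^ (2 * H) + |t| ^ (2 * H) - |s - t| ^ (2 * H))

lemma Psi_eq_fbmCov (γ ξ η : ℝ) : Psi γ ξ η = fbmCov (γ / 2) ξ η := by
  unfold Psi fbmCov
  rw [show 2 * (γ / 2) = γ by ring]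


/-- **Curvature as a generalized eigenvalue problem.** On positive-frequency
trigonometric polynomials of degree ≤ N, the Bakry–Émery condition
`Γ_{γ,2}(f,f)(x) ≥ κ Γ_γ(f,f)(x)` (both sides real, expressed via real parts)
holds for all coefficients and all `x` iff the Hermitian-form inequality
`v* R_H^{∘2} v ≥ κ v* R_H v` holds for the fBM covariance matrix with `H = γ/2`. -/
theorem curvature_eigenvalue_problem (γ : ℝ) (hγ : γ ∈ Set.Ioo (0 : ℝ) 2)
    (N : ℕ) (hN : 1 ≤ N) (κ : ℝ) :
    ((∀ a : Fin N → ℂ, ∀ x : ℝ,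
        κ * (∑ n : Fin N, ∑ m : Fin N,
            a n * (starRingEnd ℂ) (a m) *
              Complex.exp (Complex.I * ((((n : ℕ) + 1 : ℝ) - ((m : ℕ) + 1 : ℝ) : ℝ) : ℂ) * (x : ℂ)) *
              ((Psi γ ((n : ℕ) + 1) ((m : ℕ) + 1) : ℝ) : ℂ)).re
          ≤ (∑ n : Fin N, ∑ m : Fin N,
            a n * (starRingEnd ℂ) (a m) *
              Complex.exp (Complex.I * ((((n : ℕ) + 1 : ℝ) - ((m : ℕ) + 1 : ℝ) : ℝ) : ℂ) * (x : ℂ)) *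
              ((Psi γ ((n : ℕ) + 1) ((m : ℕ) + 1) : ℝ) : ℂ) ^ 2).re)
      ↔
      (∀ v : Fin N → ℂ,
        κ * (∑ n : Fin N, ∑ m : Fin N,
            v n * (starRingEnd ℂ) (v m) *
              ((fbmCov (γ / 2) ((n : ℕ) + 1) ((m : ℕ) + 1) : ℝ) : ℂ)).re
          ≤ (∑ n : Fin N, ∑ m : Fin N,
            v n * (starRingEnd ℂ) (v m) *
              ((fbmCov (γ / 2) ((n : ℕ) + 1) ((m : ℕ) + 1) : ℝ) : ℂ) ^ 2).re)) := by
  simp only [← Psi_eq_fbmCov]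
  constructor
  · intro h v
    have := h v 0
    simpa using this
  · intro h a x
    have key : ∀ n m : Fin N,
        a n * (starRingEnd ℂ) (a m) *
          Complex.exp (Complex.I * ((((n : ℕ) + 1 : ℝ) - ((m : ℕ) + 1 : ℝ) : ℝ) : ℂ) * (x : ℂ))
        = (a n * Complex.exp (Complex.I * (((n : ℕ) + 1 : ℝ) : ℂ) * (x : ℂ))) *
          (starRingEnd ℂ) (a m * Complex.exp (Complex.I * (((m : ℕ) + 1 : ℝ) : ℂ) * (x : ℂ))) := by
      intro n m
      rw [map_mul, ← Complex.exp_conj]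
      rw [show (starRingEnd ℂ) (Complex.I * (((m : ℕ) + 1 : ℝ) : ℂ) * (x : ℂ)) =
          -(Complex.I * (((m : ℕ) + 1 : ℝ) : ℂ) * (x : ℂ)) by
        simp [map_mul, Complex.conj_I, Complex.conj_ofReal]]
      rw [show a n * (starRingEnd ℂ) (a m) *
          Complex.exp (Complex.I * ((((n : ℕ) + 1 : ℝ) - ((m : ℕ) + 1 : ℝ) : ℝ) : ℂ) * (x : ℂ))
          = a n * (starRingEnd ℂ) (a m) *
            (Complex.exp (Complex.I * (((n : ℕ) + 1 : ℝ) : ℂ) * (x : ℂ)) *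
             Complex.exp (-(Complex.I * (((m : ℕ) + 1 : ℝ) : ℂ) * (x : ℂ)))) by
        rw [← Complex.exp_add]
        congr 1
        push_cast
        ring]
      ring
    have := h (fun n => a n * Complex.exp (Complex.I * (((n : ℕ) + 1 : ℝ) : ℂ) * (x : ℂ)))
    simp only [← key] at this
    convert this using 4 <;> ring
end

section
/- Let N ≥ 1 and let R be the N×N real matrix with entries R(n,m) = min(n,m) for n,m ∈ {1,…,N}. Then R is invertible, and the matrix M := R⁻¹ · R^{∘2} satisfies: M(k,k) = 2k − 1 for every k; M(k,m) = −2 for every k < m; and M(k,m) = 0 for every k > m. In particular M is upper triangular and its eigenvalues, with multiplicity, are {1, 3, 5, …, 2N−1}. -/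
/-!
Let `U` be the upper triangular all-ones matrix. Since `min(n,m) = #{k ≤ min(n,m)}` and
`min(n,m)² = ∑_{k ≤ min(n,m)} (2k - 1)`, we have `R = Uᵀ U` and `R^{∘2} = Uᵀ D U` with
`D = diag(1, 3, …, 2N - 1)`. Hence `R` is invertible and `R⁻¹ R^{∘2} = U⁻¹ D U`, where `U⁻¹` is
the forward difference matrix; taking differences of consecutive rows of `D U` gives the
entries, and the eigenvalues are the diagonal entries of the resulting triangular matrix.
-/

open Matrix Polynomial

noncomputable def minMatrix (N : ℕ) : Matrix (Fin N) (Fin N) ℝ :=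
  Matrix.of fun n m => (min ((n : ℕ) + 1) ((m : ℕ) + 1) : ℝ)

noncomputable def minMatrixSq (N : ℕ) : Matrix (Fin N) (Fin N) ℝ :=
  Matrix.of fun n m => (min ((n : ℕ) + 1) ((m : ℕ) + 1) : ℝ) ^ 2

open Finset

section

variable (α : Type*) (N : ℕ)

def upperOnes [Zero α] [One α] : Matrix (Fin N) (Fin N) α :=
  of fun i j => if (i : ℕ) ≤ j then 1 else 0

def forwardDiff [Ring α] : Matrix (Fin N) (Fin N) α :=
  of fun i k => (if (k : ℕ) = i then 1 else 0) - if (k : ℕ) = i + 1 then 1 else 0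

variable {α N}

lemma forwardDiff_mul_of_apply [Ring α] (f : ℕ → Fin N → α) (hf : ∀ j, f N j = 0)
    (i j : Fin N) :
    (forwardDiff α N * of fun (k j : Fin N) => f k j) i j = f i j - f (i + 1) j := by
  simp only [mul_apply, forwardDiff, of_apply, sub_mul, ite_mul, one_mul, zero_mul,
    sum_sub_distrib]
  rw [Fin.sum_univ_eq_sum_range (fun k => if k = i then f k j else 0),
    Fin.sum_univ_eq_sum_range (fun k => if k = i + 1 then f k j else 0), sum_ite_eq',
    sum_ite_eq', if_pos (mem_range.2 i.isLt)]
  by_cases h : (i : ℕ) + 1 < N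
  · rw [if_pos (mem_range.2 h)]
  · rw [if_neg (by simpa using h), show (i : ℕ) + 1 = N by omega, hf]

lemma forwardDiff_mul_upperOnes [Ring α] : forwardDiff α N * upperOnes α N = 1 := by
  ext i j
  rw [upperOnes, forwardDiff_mul_of_apply (fun k j => if k ≤ j then 1 else 0)
    (fun j => if_neg (by omega)), one_apply]
  simp only [Fin.ext_iff]
  split_ifs <;> first | omega | simp

lemma inv_upperOnes [CommRing α] : (upperOnes α N)⁻¹ = forwardDiff α N :=
  inv_eq_left_inv forwardDiff_mul_upperOnes

lemma isUnit_upperOnes [CommRing α] : IsUnit (upperOnes α N) :=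
  (isUnit_iff_isUnit_det _).2 (isUnit_det_of_left_inverse forwardDiff_mul_upperOnes)

lemma transpose_upperOnes_mul_diagonal_mul_upperOnes_apply [Semiring α] (w : ℕ → α)
    (i j : Fin N) :
    ((upperOnes α N)ᵀ * diagonal (fun k : Fin N => w k) * upperOnes α N) i j =
      ∑ k ∈ range (min (i : ℕ) j + 1), w k := by
  rw [mul_apply]
  simp only [mul_diagonal, transpose_apply, upperOnes, of_apply, ite_mul, mul_ite, one_mul,
    mul_one, zero_mul, mul_zero]
  rw [Fin.sum_univ_eq_sum_range (fun k => if k ≤ j then if k ≤ i then w k else 0 else 0),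
    ← sum_filter, ← sum_filter, filter_filter]
  congr 1
  ext k
  simp only [mem_filter, mem_range]
  omega

lemma sum_range_two_mul_add_one [CommSemiring α] (p : ℕ) :
    ∑ k ∈ range p, (2 * (k : α) + 1) = p ^ 2 := by
  induction p with
  | zero => simp
  | succ p ih => rw [sum_range_succ, ih]; push_cast; ring

end

lemma minMatrix_eq (N : ℕ) : minMatrix N = (upperOnes ℝ N)ᵀ * upperOnes ℝ N := by
  ext i j
  have h := transpose_upperOnes_mul_diagonal_mul_upperOnes_apply (fun _ => (1 : ℝ)) i j
  rw [diagonal_one, Matrix.mul_one] at h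
  rw [h, minMatrix, of_apply]
  simp [min_add_add_right]

lemma minMatrixSq_eq (N : ℕ) :
    minMatrixSq N =
      (upperOnes ℝ N)ᵀ * diagonal (fun k : Fin N => 2 * ((k : ℕ) : ℝ) + 1) * upperOnes ℝ N := by
  ext i j
  rw [transpose_upperOnes_mul_diagonal_mul_upperOnes_apply (fun k => 2 * (k : ℝ) + 1),
    sum_range_two_mul_add_one, minMatrixSq, of_apply]
  simp [min_add_add_right]

lemma isUnit_minMatrix (N : ℕ) : IsUnit (minMatrix N) := by
  rw [minMatrix_eq]
  exact ((isUnit_transpose _).2 isUnit_upperOnes).mul isUnit_upperOnes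

lemma minMatrix_inv_mul_minMatrixSq (N : ℕ) :
    (minMatrix N)⁻¹ * minMatrixSq N =
      forwardDiff ℝ N * (diagonal (fun k : Fin N => 2 * ((k : ℕ) : ℝ) + 1) * upperOnes ℝ N) := by
  have hU : IsUnit (upperOnes ℝ N)ᵀ.det :=
    (isUnit_iff_isUnit_det _).1 ((isUnit_transpose _).2 isUnit_upperOnes)
  rw [minMatrix_eq, minMatrixSq_eq, Matrix.mul_inv_rev, inv_upperOnes, Matrix.mul_assoc,
    Matrix.mul_assoc, nonsing_inv_mul_cancel_left _ _ hU]

lemma minMatrix_inv_mul_minMatrixSq_apply (N : ℕ) (i j : Fin N) :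
    ((minMatrix N)⁻¹ * minMatrixSq N) i j =
      (if (i : ℕ) ≤ j then 2 * (i : ℝ) + 1 else 0) -
        if (i : ℕ) + 1 ≤ j then 2 * ((i : ℝ) + 1) + 1 else 0 := by
  have hDU : diagonal (fun k : Fin N => 2 * ((k : ℕ) : ℝ) + 1) * upperOnes ℝ N =
      of fun (k j : Fin N) => if (k : ℕ) ≤ j then 2 * ((k : ℕ) : ℝ) + 1 else 0 := by
    ext k j
    simp [diagonal_mul, upperOnes]
  rw [minMatrix_inv_mul_minMatrixSq, hDU, forwardDiff_mul_of_apply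
    (fun k j => if k ≤ j then 2 * (k : ℝ) + 1 else 0) (fun j => if_neg (by omega))]
  push_cast
  rfl

theorem cauchy_odd_integer_eigenvalues_general (N : ℕ) :
    IsUnit (minMatrix N) ∧
    (∀ k : Fin N, ((minMatrix N)⁻¹ * minMatrixSq N) k k = 2 * ((k : ℕ) + 1 : ℝ) - 1) ∧
    (∀ k m : Fin N, k < m → ((minMatrix N)⁻¹ * minMatrixSq N) k m = -2) ∧
    (∀ k m : Fin N, m < k → ((minMatrix N)⁻¹ * minMatrixSq N) k m = 0) ∧
    ((minMatrix N)⁻¹ * minMatrixSq N).charpoly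
      = ∏ k : Fin N, (X - C (2 * ((k : ℕ) + 1 : ℝ) - 1)) := by
  have diag (k : Fin N) :
      ((minMatrix N)⁻¹ * minMatrixSq N) k k = 2 * ((k : ℕ) + 1 : ℝ) - 1 := by
    rw [minMatrix_inv_mul_minMatrixSq_apply, if_pos le_rfl, if_neg (by omega)]
    ring
  have below (k m : Fin N) (h : m < k) : ((minMatrix N)⁻¹ * minMatrixSq N) k m = 0 := by
    rw [minMatrix_inv_mul_minMatrixSq_apply, if_neg (by omega), if_neg (by omega), sub_zero]
  refine ⟨isUnit_minMatrix N, diag, fun k m h => ?_, below, ?_⟩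
  · rw [minMatrix_inv_mul_minMatrixSq_apply, if_pos (by omega), if_pos (by omega)]
    ring
  · rw [charpoly_of_isUpperTriangular _ below]
    simp only [diag]

/-- **Odd integer eigenvalues at γ = 1.** The matrix `R⁻¹ R^{∘2}` (with
`R(n,m) = min(n,m)`) is upper triangular with diagonal entries `2k - 1`,
off-diagonal entries `-2` above the diagonal and `0` below; hence its
eigenvalues, with multiplicity, are `{1, 3, …, 2N-1}`. -/
theorem cauchy_odd_integer_eigenvalues (N : ℕ) (hN : 1 ≤ N) :
    IsUnit (minMatrix N) ∧
    (∀ k : Fin N, ((minMatrix N)⁻¹ * minMatrixSq N) k k = 2 * ((k : ℕ) + 1 : ℝ) - 1) ∧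
    (∀ k m : Fin N, k < m → ((minMatrix N)⁻¹ * minMatrixSq N) k m = -2) ∧
    (∀ k m : Fin N, m < k → ((minMatrix N)⁻¹ * minMatrixSq N) k m = 0) ∧
    ((minMatrix N)⁻¹ * minMatrixSq N).charpoly
      = ∏ k : Fin N, (X - C (2 * ((k : ℕ) + 1 : ℝ) - 1)) :=
  cauchy_odd_integer_eigenvalues_general N
end

section
/- Let N ≥ 1 and let R be the N×N real matrix with entries R(n,m) = min(n,m) for n,m ∈ {1,…,N}. Then for every v : Fin N → ℂ, ∑_{n,m} v_n·conj(v_m)·min(n,m)² ≥ ∑_{n,m} v_n·conj(v_m)·min(n,m), i.e. R^{∘2} − R is positive semidefinite; moreover equality holds for v = e₁ (the first standard basis vector), so the largest constant κ for which ∑ v_n conj(v_m) min(n,m)² ≥ κ·∑ v_n conj(v_m) min(n,m) holds for all v is exactly κ = 1. Hence κ(1,N) = 1 for all N: the Cauchy semigroup satisfies CD(1,∞) on positive-frequency polynomials of every degree. -/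
/-! Since `a² - a = ∑_{k<a} 2k`, the kernel `min(n,m)² - min(n,m)` equals
`∑_k 2k · 1[k < n] · 1[k < m]`, a nonnegative combination of rank-one kernels, so its Hermitian
form is `∑_k 2k |∑_{n>k} v_n|² ≥ 0`. At `v = e₁` both forms equal `min(1,1) = 1`, which forces
`κ ≤ 1`. -/

open Finset ComplexConjugate

theorem sum_range_min_eq_sum_mul_mul {M a b : ℕ} (ha : a ≤ M) (c : ℕ → ℝ) :
    ∑ k ∈ range (min a b), c k
      = ∑ k ∈ range M, c k * (if k < a then 1 else 0) * (if k < b then 1 else 0) := by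
  rw [← sum_subset (range_subset_range.2 (le_trans (min_le_left a b) ha))]
  · refine sum_congr rfl fun k hk => ?_
    simp_all
  · intro k _ hk
    simp only [mem_range, lt_min_iff, not_and_or, not_lt] at hk
    rcases hk with hk | hk <;> simp [hk.not_gt]

theorem sq_sub_self_eq_sum_range (a : ℕ) : (a : ℝ) ^ 2 - a = ∑ k ∈ range a, (2 * k : ℝ) := by
  induction a with
  | zero => simp
  | succ b ih => rw [sum_range_succ, ← ih]; push_cast; ring

section

variable {ι κ : Type*} [Fintype ι]

def kernelForm (K : ι → ι → ℂ) (v : ι → ℂ) : ℂ :=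
  ∑ n, ∑ m, v n * conj (v m) * K n m

theorem kernelForm_sub (K L : ι → ι → ℂ) (v : ι → ℂ) :
    kernelForm K v - kernelForm L v = kernelForm (fun n m => K n m - L n m) v := by
  simp only [kernelForm, ← sum_sub_distrib, ← mul_sub]

theorem kernelForm_single [DecidableEq ι] (K : ι → ι → ℂ) (i : ι) :
    kernelForm K (Pi.single i 1) = K i i := by
  simp [kernelForm, Pi.single_apply, apply_ite conj]

theorem kernelForm_sum_mul_mul (s : Finset κ) (c : κ → ℝ) (u : κ → ι → ℝ) (v : ι → ℂ) :
    kernelForm (fun n m => ((∑ k ∈ s, c k * u k n * u k m : ℝ) : ℂ)) v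
      = ∑ k ∈ s, (c k : ℂ) * ((∑ n, (u k n : ℂ) * v n) * conj (∑ n, (u k n : ℂ) * v n)) := by
  simp_rw [kernelForm, map_sum, map_mul, Complex.conj_ofReal, sum_mul_sum, mul_sum,
    Complex.ofReal_sum, Complex.ofReal_mul, mul_sum]
  rw [sum_comm_cycle]
  exact sum_congr rfl fun k _ => sum_congr rfl fun n _ => sum_congr rfl fun m _ => by ring

theorem re_kernelForm_sum_mul_mul_nonneg {s : Finset κ} {c : κ → ℝ} (hc : ∀ k ∈ s, 0 ≤ c k)
    (u : κ → ι → ℝ) (v : ι → ℂ) :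
    0 ≤ (kernelForm (fun n m => ((∑ k ∈ s, c k * u k n * u k m : ℝ) : ℂ)) v).re := by
  rw [kernelForm_sum_mul_mul, Complex.re_sum]
  refine sum_nonneg fun k hk => ?_
  rw [Complex.mul_conj, ← Complex.ofReal_mul, Complex.ofReal_re]
  exact mul_nonneg (hc k hk) (Complex.normSq_nonneg _)

/-- Every nondecreasing `F : ℕ → ℝ` with `F 0 = 0` is `a ↦ ∑_{k<a} c k` for some `c ≥ 0`,
so `F (min (a n) (a m))` is a positive semidefinite kernel. -/
theorem re_kernelForm_sum_range_min_nonneg (a : ι → ℕ) {c : ℕ → ℝ} (hc : ∀ k, 0 ≤ c k)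
    (v : ι → ℂ) :
    0 ≤ (kernelForm (fun n m => ((∑ k ∈ range (min (a n) (a m)), c k : ℝ) : ℂ)) v).re := by
  have ha : ∀ n, a n ≤ univ.sup a := fun n => le_sup (mem_univ n)
  simp_rw [sum_range_min_eq_sum_mul_mul (ha _)]
  exact re_kernelForm_sum_mul_mul_nonneg (fun k _ => hc k) _ v

theorem re_kernelForm_min_le_min_sq (a : ι → ℕ) (v : ι → ℂ) :
    (kernelForm (fun n m => (((min (a n) (a m) : ℕ) : ℝ) : ℂ)) v).re
      ≤ (kernelForm (fun n m => (((min (a n) (a m) : ℕ) : ℝ) : ℂ) ^ 2) v).re := by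
  rw [← sub_nonneg, ← Complex.sub_re, kernelForm_sub]
  simp_rw [← Complex.ofReal_pow, ← Complex.ofReal_sub, sq_sub_self_eq_sum_range]
  exact re_kernelForm_sum_range_min_nonneg a (fun k => by positivity) v

end

/-- **κ(1,N) = 1: the Cauchy semigroup satisfies CD(1,∞) on positive-frequency
polynomials of every degree.** For the matrix `R(n,m) = min(n,m)` on {1,…,N}:
`R^{∘2} - R` is positive semidefinite (as a Hermitian form on ℂᴺ), equality
holds at the first standard basis vector `e₁`, and `1` is the largest constant
`κ` such that `v* R^{∘2} v ≥ κ v* R v` for all `v`. -/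
theorem cauchy_curvature_one (N : ℕ) (hN : 1 ≤ N)
    (e₁ : Fin N → ℂ) (he₁ : e₁ = fun n : Fin N => if (n : ℕ) = 0 then (1 : ℂ) else 0) :
    (∀ v : Fin N → ℂ,
      (∑ n : Fin N, ∑ m : Fin N,
          v n * (starRingEnd ℂ) (v m) * ((min ((n : ℕ) + 1) ((m : ℕ) + 1) : ℝ) : ℂ)).re
        ≤ (∑ n : Fin N, ∑ m : Fin N,
          v n * (starRingEnd ℂ) (v m) * ((min ((n : ℕ) + 1) ((m : ℕ) + 1) : ℝ) : ℂ) ^ 2).re) ∧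
    ((∑ n : Fin N, ∑ m : Fin N,
        e₁ n * (starRingEnd ℂ) (e₁ m) * ((min ((n : ℕ) + 1) ((m : ℕ) + 1) : ℝ) : ℂ)).re
      = (∑ n : Fin N, ∑ m : Fin N,
        e₁ n * (starRingEnd ℂ) (e₁ m) * ((min ((n : ℕ) + 1) ((m : ℕ) + 1) : ℝ) : ℂ) ^ 2).re) ∧
    IsGreatest {κ : ℝ | ∀ v : Fin N → ℂ,
      κ * (∑ n : Fin N, ∑ m : Fin N,
          v n * (starRingEnd ℂ) (v m) * ((min ((n : ℕ) + 1) ((m : ℕ) + 1) : ℝ) : ℂ)).re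
        ≤ (∑ n : Fin N, ∑ m : Fin N,
          v n * (starRingEnd ℂ) (v m) * ((min ((n : ℕ) + 1) ((m : ℕ) + 1) : ℝ) : ℂ) ^ 2).re} 1 := by
  have hineq (v : Fin N → ℂ) := re_kernelForm_min_le_min_sq (fun n : Fin N => (n : ℕ) + 1) v
  simp only [kernelForm, Nat.cast_min, Nat.cast_add, Nat.cast_one] at hineq
  have he₁_single : e₁ = Pi.single ⟨0, hN⟩ 1 := by
    rw [he₁]; ext n; simp [Pi.single_apply, Fin.ext_iff]
  have hR : (kernelForm (fun n m : Fin N => ((min ((n : ℕ) + 1) ((m : ℕ) + 1) : ℝ) : ℂ)) e₁).re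
      = 1 := by
    rw [he₁_single, kernelForm_single]; simp
  have hR2 : (kernelForm (fun n m : Fin N => ((min ((n : ℕ) + 1) ((m : ℕ) + 1) : ℝ) : ℂ) ^ 2)
      e₁).re = 1 := by
    rw [he₁_single, kernelForm_single]; simp
  simp only [kernelForm] at hR hR2
  refine ⟨hineq, hR.trans hR2.symm, fun v => by simpa using hineq v, fun κ hκ => ?_⟩
  simpa only [hR, hR2, mul_one] using hκ e₁
end

section
/- Let γ ∈ (0,2) and set α := 1 − 2^{γ−1}, so α ∈ (−1,1), with α ≥ 0 iff γ ≤ 1. Define κ₁(γ) := (1+α²)/(1+α) if γ ≤ 1, and κ₁(γ) := 1 + α = 2 − 2^{γ−1} if γ > 1. Then for every c ∈ [−1,1] one has (1 + α²·c)/(1 + α·c) ≥ κ₁(γ), with equality at c = 1 when γ ≤ 1 and at c = −1 when γ > 1; moreover κ₁(1) = 1 and κ₁(γ) < 1 for every γ ≠ 1. Consequently the single-mode Bakry–Émery curvature of f(x) = cos(nx + φ) under the γ-stable generator equals κ₁(γ), and is < 1 exactly when γ ≠ 1. -/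
/-! For `0 < γ < 2` we have `1/2 < 2^{γ-1} < 2`, so `α = 1 - 2^{γ-1} ∈ (-1,1)` and the
denominator `1 + αc` is positive on `[-1,1]`. Clearing it, the lower bounds reduce to
`α(1-α)(c-1) ≤ 0` when `α ≥ 0` and to `α(1+c) ≤ 0` when `α ≤ 0`. -/

open Real

lemma one_sub_two_rpow_sub_one_mem_Ioo {γ : ℝ} (hγ : γ ∈ Set.Ioo (0 : ℝ) 2) :
    1 - (2 : ℝ) ^ (γ - 1) ∈ Set.Ioo (-1 : ℝ) 1 := by
  have hlt : (2 : ℝ) ^ (γ - 1) < 2 ^ (1 : ℝ) :=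
    (rpow_lt_rpow_left_iff one_lt_two).mpr (by linarith [hγ.2])
  have hgt : (2 : ℝ) ^ (-1 : ℝ) < 2 ^ (γ - 1) :=
    (rpow_lt_rpow_left_iff one_lt_two).mpr (by linarith [hγ.1])
  rw [rpow_one] at hlt
  rw [rpow_neg_one] at hgt
  constructor <;> linarith

lemma one_sub_two_rpow_sub_one_nonneg_iff (γ : ℝ) : 0 ≤ 1 - (2 : ℝ) ^ (γ - 1) ↔ γ ≤ 1 := by
  rw [sub_nonneg, ← rpow_zero 2, rpow_le_rpow_left_iff one_lt_two, rpow_zero, sub_nonpos]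

lemma one_sub_two_rpow_sub_one_pos_iff (γ : ℝ) : 0 < 1 - (2 : ℝ) ^ (γ - 1) ↔ γ < 1 := by
  rw [sub_pos, ← rpow_zero 2, rpow_lt_rpow_left_iff one_lt_two, rpow_zero, sub_neg]

section RatioBounds

variable {a c : ℝ}

lemma one_add_mul_pos (ha : a ∈ Set.Ioo (-1 : ℝ) 1) (hc : c ∈ Set.Icc (-1 : ℝ) 1) :
    0 < 1 + a * c := by
  have h : |a * c| < 1 := by
    rw [abs_mul]
    exact mul_lt_one_of_nonneg_of_lt_one_left (abs_nonneg a) (abs_lt.mpr ha)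
      (abs_le.mpr hc)
  linarith [neg_abs_le (a * c)]

lemma div_one_add_le_ratio_of_nonneg (ha₀ : 0 ≤ a) (ha₁ : a ≤ 1) (hc : c ≤ 1)
    (hden : 0 < 1 + a * c) :
    (1 + a ^ 2) / (1 + a) ≤ (1 + a ^ 2 * c) / (1 + a * c) := by
  rw [div_le_div_iff₀ (by linarith) hden]
  nlinarith [mul_nonneg (mul_nonneg ha₀ (sub_nonneg.mpr ha₁)) (sub_nonneg.mpr hc)]

lemma one_add_le_ratio_of_nonpos (ha : a ≤ 0) (hc : -1 ≤ c) (hden : 0 < 1 + a * c) :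
    1 + a ≤ (1 + a ^ 2 * c) / (1 + a * c) := by
  rw [le_div_iff₀ hden]
  nlinarith [mul_nonpos_of_nonpos_of_nonneg ha (neg_le_iff_add_nonneg'.mp hc)]

lemma ratio_neg_one (ha : a ≠ 1) : (1 + a ^ 2 * (-1)) / (1 + a * (-1)) = 1 + a := by
  rw [div_eq_iff (by contrapose! ha; linarith)]
  ring

lemma div_one_add_lt_one (ha₀ : 0 < a) (ha₁ : a < 1) : (1 + a ^ 2) / (1 + a) < 1 := by
  rw [div_lt_one (by linarith)]
  nlinarith

end RatioBounds

/-- **Single-mode curvature formula.** With `α = 1 - 2^{γ-1}` one has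
`α ∈ (-1,1)` and `α ≥ 0 ↔ γ ≤ 1`. Setting `κ₁(γ) = (1+α²)/(1+α)` for `γ ≤ 1`
and `κ₁(γ) = 1 + α = 2 - 2^{γ-1}` for `γ > 1`, the function
`c ↦ (1 + α²c)/(1 + αc)` on `[-1,1]` is bounded below by `κ₁(γ)`, with
equality at `c = 1` when `γ ≤ 1` and at `c = -1` when `γ > 1`; moreover
`κ₁(1) = 1` and `κ₁(γ) < 1` for `γ ≠ 1`. This is the Bakry–Émery curvature of
a single mode `cos(nx + φ)` under the γ-stable generator. -/
theorem single_mode_curvature (γ : ℝ) (hγ : γ ∈ Set.Ioo (0 : ℝ) 2)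
    (α κ₁ : ℝ) (hα : α = 1 - (2 : ℝ) ^ (γ - 1))
    (hκ : κ₁ = if γ ≤ 1 then (1 + α ^ 2) / (1 + α) else 1 + α) :
    α ∈ Set.Ioo (-1 : ℝ) 1 ∧
    (0 ≤ α ↔ γ ≤ 1) ∧
    (∀ c ∈ Set.Icc (-1 : ℝ) 1, κ₁ ≤ (1 + α ^ 2 * c) / (1 + α * c)) ∧
    (γ ≤ 1 → (1 + α ^ 2 * 1) / (1 + α * 1) = κ₁) ∧
    (1 < γ → (1 + α ^ 2 * (-1)) / (1 + α * (-1)) = κ₁) ∧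
    (γ = 1 → κ₁ = 1) ∧
    (γ ≠ 1 → κ₁ < 1) := by
  subst hα
  set α := 1 - (2 : ℝ) ^ (γ - 1)
  have hαI : α ∈ Set.Ioo (-1 : ℝ) 1 := one_sub_two_rpow_sub_one_mem_Ioo hγ
  have hsign : 0 ≤ α ↔ γ ≤ 1 := one_sub_two_rpow_sub_one_nonneg_iff γ
  refine ⟨hαI, hsign, fun c hc => ?_, fun h => ?_, fun h => ?_, fun h => ?_, fun h => ?_⟩
  · have hden := one_add_mul_pos hαI hc
    split_ifs at hκ with h
    · exact hκ ▸ div_one_add_le_ratio_of_nonneg (hsign.mpr h) hαI.2.le hc.2 hden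
    · exact hκ ▸ one_add_le_ratio_of_nonpos (not_le.mp (hsign.not.mpr h)).le hc.1 hden
  · rw [hκ, if_pos h, mul_one, mul_one]
  · rw [hκ, if_neg h.not_ge, ratio_neg_one hαI.2.ne]
  · have hα₀ : α = 0 := by simp [α, h]
    simp [hκ, h, hα₀]
  · split_ifs at hκ with hle
    · exact hκ ▸ div_one_add_lt_one ((one_sub_two_rpow_sub_one_pos_iff γ).mpr
        (lt_of_le_of_ne hle h)) hαI.2
    · linarith [not_le.mp (hsign.not.mpr hle)]
end

section
/- Let N ≥ 1, let ω ∈ ℝ with ω² < 2, and let R be the N×N real matrix with entries R(n,m) = min(n,m) for n,m ∈ {1,…,N}. Then for every v : Fin N → ℂ and every x ∈ ℝ, ∑_{n,m} v_n·conj(v_m)·min(n,m)² + (ω²/2)·cos x·∑_{n,m} v_n·conj(v_m)·min(n,m) ≥ (1 − ω²/2)·∑_{n,m} v_n·conj(v_m)·min(n,m). Moreover this constant is sharp: at x = π and v = e₁ the inequality holds with equality. Hence the Cauchy–Fokker–Planck operator with potential V(x) = −ω²cos x satisfies the global curvature bound CD(1 − ω²/2, ∞) on positive-frequency polynomials of every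 degree. -/
open Finset

private lemma sum_odd (t : ℕ) : ∑ j ∈ Finset.range t, ((2*j+1 : ℕ) : ℂ) = (t:ℂ)^2 := by
  induction t with
  | zero => simp
  | succ n ih => rw [Finset.sum_range_succ, ih]; push_cast; ring

private lemma min_rep (N : ℕ) (n m : Fin N) (c : ℕ → ℂ) :
    (∑ k : Fin N, if (k:ℕ) ≤ (n:ℕ) ∧ (k:ℕ) ≤ (m:ℕ) then c (k:ℕ) else 0)
      = ∑ j ∈ Finset.range (min ((n:ℕ)+1) ((m:ℕ)+1)), c j := by
  rw [Fin.sum_univ_eq_sum_range (fun j => if j ≤ (n:ℕ) ∧ j ≤ (m:ℕ) then c j else 0) N,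
      ← Finset.sum_filter]
  congr 1
  ext j
  have := n.isLt; have := m.isLt
  simp only [Finset.mem_filter, Finset.mem_range]
  omega

private lemma quad (N : ℕ) (v : Fin N → ℂ) (c : ℕ → ℂ) :
    (∑ n : Fin N, ∑ m : Fin N, v n * (starRingEnd ℂ) (v m) *
        ∑ j ∈ Finset.range (min ((n:ℕ)+1) ((m:ℕ)+1)), c j)
      = ∑ k : Fin N, c (k:ℕ) *
          ((∑ n : Fin N, if (k:ℕ) ≤ (n:ℕ) then v n else 0) *
           (starRingEnd ℂ) (∑ n : Fin N, if (k:ℕ) ≤ (n:ℕ) then v n else 0)) := by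
  simp only [← min_rep]
  have step1 : ∀ n m : Fin N, v n * (starRingEnd ℂ) (v m) *
      (∑ k : Fin N, if (k:ℕ) ≤ (n:ℕ) ∧ (k:ℕ) ≤ (m:ℕ) then c (k:ℕ) else 0)
      = ∑ k : Fin N, (if (k:ℕ) ≤ (n:ℕ) ∧ (k:ℕ) ≤ (m:ℕ) then
          v n * (starRingEnd ℂ) (v m) * c (k:ℕ) else 0) := by
    intro n m
    rw [Finset.mul_sum]
    exact Finset.sum_congr rfl fun k _ => by split_ifs <;> simp
  simp only [step1]
  rw [show (∑ n : Fin N, ∑ m : Fin N, ∑ k : Fin N, (if (k:ℕ) ≤ (n:ℕ) ∧ (k:ℕ) ≤ (m:ℕ) then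
          v n * (starRingEnd ℂ) (v m) * c (k:ℕ) else 0))
      = ∑ k : Fin N, ∑ n : Fin N, ∑ m : Fin N, (if (k:ℕ) ≤ (n:ℕ) ∧ (k:ℕ) ≤ (m:ℕ) then
          v n * (starRingEnd ℂ) (v m) * c (k:ℕ) else 0) from by
    rw [show (∑ n : Fin N, ∑ m : Fin N, ∑ k : Fin N, (if (k:ℕ) ≤ (n:ℕ) ∧ (k:ℕ) ≤ (m:ℕ) then
          v n * (starRingEnd ℂ) (v m) * c (k:ℕ) else 0))
        = ∑ n : Fin N, ∑ k : Fin N, ∑ m : Fin N, (if (k:ℕ) ≤ (n:ℕ) ∧ (k:ℕ) ≤ (m:ℕ) then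
          v n * (starRingEnd ℂ) (v m) * c (k:ℕ) else 0) from
      Finset.sum_congr rfl fun n _ => Finset.sum_comm]
    exact Finset.sum_comm]
  refine Finset.sum_congr rfl fun k _ => ?_
  rw [map_sum, Finset.sum_mul_sum, Finset.mul_sum]
  refine Finset.sum_congr rfl fun n _ => ?_
  rw [Finset.mul_sum]
  refine Finset.sum_congr rfl fun m _ => ?_
  by_cases h1 : (k:ℕ) ≤ (n:ℕ) <;> by_cases h2 : (k:ℕ) ≤ (m:ℕ) <;> simp [h1, h2] <;> ring

/-- **Global curvature under drift: CD(1 - ω²/2, ∞) for the Cauchy–Fokker–Planck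
operator.** In phase-stripped Fourier coordinates, with `R(n,m) = min(n,m)` on
{1,…,N}, the curvature form `v*(R^{∘2} + (ω²/2) cos x · R)v` dominates
`(1 - ω²/2) v* R v` for every `v` and every `x`, and the constant is sharp:
equality holds at `x = π`, `v = e₁`. -/
theorem cauchy_fokker_planck_curvature (N : ℕ) (hN : 1 ≤ N) (ω : ℝ) (hω : ω ^ 2 < 2)
    (e₁ : Fin N → ℂ) (he₁ : e₁ = fun n : Fin N => if (n : ℕ) = 0 then (1 : ℂ) else 0) :
    (∀ v : Fin N → ℂ, ∀ x : ℝ,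
      (1 - ω ^ 2 / 2) * (∑ n : Fin N, ∑ m : Fin N,
          v n * (starRingEnd ℂ) (v m) * ((min ((n : ℕ) + 1) ((m : ℕ) + 1) : ℝ) : ℂ)).re
        ≤ (∑ n : Fin N, ∑ m : Fin N,
            v n * (starRingEnd ℂ) (v m) * ((min ((n : ℕ) + 1) ((m : ℕ) + 1) : ℝ) : ℂ) ^ 2).re
          + (ω ^ 2 / 2) * Real.cos x * (∑ n : Fin N, ∑ m : Fin N,
            v n * (starRingEnd ℂ) (v m) * ((min ((n : ℕ) + 1) ((m : ℕ) + 1) : ℝ) : ℂ)).re) ∧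
    ((1 - ω ^ 2 / 2) * (∑ n : Fin N, ∑ m : Fin N,
        e₁ n * (starRingEnd ℂ) (e₁ m) * ((min ((n : ℕ) + 1) ((m : ℕ) + 1) : ℝ) : ℂ)).re
      = (∑ n : Fin N, ∑ m : Fin N,
          e₁ n * (starRingEnd ℂ) (e₁ m) * ((min ((n : ℕ) + 1) ((m : ℕ) + 1) : ℝ) : ℂ) ^ 2).re
        + (ω ^ 2 / 2) * Real.cos Real.pi * (∑ n : Fin N, ∑ m : Fin N,
          e₁ n * (starRingEnd ℂ) (e₁ m) * ((min ((n : ℕ) + 1) ((m : ℕ) + 1) : ℝ) : ℂ)).re) := by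
  constructor
  · intro v x
    set W : Fin N → ℂ := fun k => ∑ n : Fin N, if (k:ℕ) ≤ (n:ℕ) then v n else 0 with hW
    have hcast1 : ∀ n m : Fin N, ((min ((n:ℕ)+1) ((m:ℕ)+1) : ℝ) : ℂ)
        = ∑ j ∈ Finset.range (min ((n:ℕ)+1) ((m:ℕ)+1)), (1:ℂ) := by
      intro n m
      rw [Finset.sum_const, Finset.card_range, nsmul_eq_mul, mul_one]
      norm_cast
    have hcast2 : ∀ n m : Fin N, ((min ((n:ℕ)+1) ((m:ℕ)+1) : ℝ) : ℂ) ^ 2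
        = ∑ j ∈ Finset.range (min ((n:ℕ)+1) ((m:ℕ)+1)), ((2*j+1 : ℕ) : ℂ) := by
      intro n m
      rw [sum_odd]
      norm_cast
    have h1 : (∑ n : Fin N, ∑ m : Fin N,
        v n * (starRingEnd ℂ) (v m) * ((min ((n : ℕ) + 1) ((m : ℕ) + 1) : ℝ) : ℂ)).re
        = ∑ k : Fin N, Complex.normSq (W k) := by
      simp only [hcast1]
      rw [quad N v (fun _ => (1:ℂ)), Complex.re_sum]
      refine Finset.sum_congr rfl fun k _ => ?_
      rw [one_mul, Complex.mul_conj, Complex.ofReal_re]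
    have h2 : (∑ n : Fin N, ∑ m : Fin N,
        v n * (starRingEnd ℂ) (v m) * ((min ((n : ℕ) + 1) ((m : ℕ) + 1) : ℝ) : ℂ) ^ 2).re
        = ∑ k : Fin N, (2*(k:ℕ)+1 : ℝ) * Complex.normSq (W k) := by
      simp only [hcast2]
      rw [quad N v (fun j => ((2*j+1 : ℕ) : ℂ)), Complex.re_sum]
      refine Finset.sum_congr rfl fun k _ => ?_
      rw [Complex.mul_conj,
        show ((2*(k:ℕ)+1 : ℕ):ℂ) = ((2*(k:ℕ)+1 : ℝ):ℂ) by push_cast; ring,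
        ← Complex.ofReal_mul, Complex.ofReal_re]
    rw [h1, h2]
    set A := ∑ k : Fin N, Complex.normSq (W k) with hA
    have hA0 : 0 ≤ A := Finset.sum_nonneg fun k _ => Complex.normSq_nonneg _
    have hBA : A ≤ ∑ k : Fin N, (2*(k:ℕ)+1 : ℝ) * Complex.normSq (W k) := by
      refine Finset.sum_le_sum fun k _ => ?_
      nlinarith [Complex.normSq_nonneg (W k)]
    have hc : -1 ≤ Real.cos x := Real.neg_one_le_cos x
    nlinarith [mul_nonneg (mul_nonneg (by positivity : (0:ℝ) ≤ ω^2/2)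
      (by linarith : (0:ℝ) ≤ Real.cos x + 1)) hA0]
  · have hz : ∀ n : Fin N, ((n:ℕ) = 0 ↔ n = (⟨0, hN⟩ : Fin N)) := by
      intro n; simp [Fin.ext_iff]
    simp only [he₁, hz]
    simp [Finset.sum_ite_eq', apply_ite ((starRingEnd ℂ)), ite_mul, mul_ite, Real.cos_pi]
    ring
end

section
/- Let N ≥ 1 and let R^{∘2} be the N×N real matrix with entries min(n,m)² for n,m ∈ {1,…,N}. Then det R^{∘2} = ∏_{k=1}^{N} (2k − 1) = (2N−1)!!. Equivalently, since det R = 1 for the matrix R(n,m) = min(n,m), the volume ratio of the Γ-ellipsoid to the Γ₂-ellipsoid at γ = 1 is (det(R⁻¹R^{∘2}))^{1/2} = ((2N−1)!!)^{1/2}. -/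
open Matrix Finset

namespace Matrix

variable {ι R : Type*} [LinearOrder ι]

def lowerTriangularOnes [Zero R] [One R] : Matrix ι ι R :=
  of fun i k => if k ≤ i then 1 else 0

theorem lowerTriangularOnes_isLowerTriangular [Zero R] [One R] :
    (lowerTriangularOnes : Matrix ι ι R).IsLowerTriangular := by
  intro i k hik
  exact if_neg (not_le.mpr hik)

variable [Fintype ι] [CommRing R]

theorem det_lowerTriangularOnes : (lowerTriangularOnes : Matrix ι ι R).det = 1 := by
  rw [det_of_isLowerTriangular _ lowerTriangularOnes_isLowerTriangular]
  simp [lowerTriangularOnes]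

variable [LocallyFiniteOrderBot ι]

theorem lowerTriangularOnes_mul_diagonal_mul_transpose (c : ι → R) :
    lowerTriangularOnes * diagonal c * lowerTriangularOnesᵀ =
      of fun i j => ∑ k ∈ Iic (min i j), c k := by
  ext i j
  have hIic : ({k | k ≤ i ∧ k ≤ j} : Finset ι) = Iic (min i j) := by
    ext k; simp
  rw [mul_apply]
  simp only [mul_diagonal, transpose_apply, lowerTriangularOnes, of_apply, ite_mul,
    one_mul, zero_mul, mul_ite, mul_one, mul_zero, ← hIic, sum_filter]
  exact sum_congr rfl fun k _ => by split_ifs <;> simp_all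

theorem det_of_sum_Iic_min (c : ι → R) :
    (of fun i j => ∑ k ∈ Iic (min i j), c k).det = ∏ i, c i := by
  rw [← lowerTriangularOnes_mul_diagonal_mul_transpose, det_mul, det_mul, det_transpose,
    det_lowerTriangularOnes, det_diagonal, one_mul, mul_one]

end Matrix

theorem Fin.sum_Iic_val {M : Type*} [AddCommMonoid M] {N : ℕ} (f : ℕ → M) (m : Fin N) :
    ∑ k ∈ Iic m, f k = ∑ k ∈ range (m + 1), f k := by
  rw [Nat.range_succ_eq_Iic, ← Fin.map_valEmbedding_Iic, sum_map]
  rfl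

theorem sum_range_two_mul_add_one_sub_one {R : Type*} [CommRing R] (n : ℕ) :
    ∑ k ∈ range n, (2 * ((k : R) + 1) - 1) = n ^ 2 := by
  induction n with
  | zero => simp
  | succ n ih => rw [sum_range_succ, ih]; push_cast; ring

theorem minMatrix_eq_sum_Iic_min (N : ℕ) :
    minMatrix N = of fun i j => ∑ _k ∈ Iic (min i j), (1 : ℝ) := by
  ext i j
  simp [minMatrix, Fin.card_Iic, Fin.coe_min, min_add_add_right]

theorem minMatrixSq_eq_sum_Iic_min (N : ℕ) :
    minMatrixSq N = of fun i j : Fin N => ∑ k ∈ Iic (min i j), (2 * (((k : ℕ) : ℝ) + 1) - 1) := by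
  ext i j
  rw [of_apply, Fin.sum_Iic_val (fun k : ℕ => 2 * ((k : ℝ) + 1) - 1),
    sum_range_two_mul_add_one_sub_one]
  simp [minMatrixSq, Fin.coe_min, min_add_add_right]

theorem det_minMatrix (N : ℕ) : (minMatrix N).det = 1 := by
  rw [minMatrix_eq_sum_Iic_min, det_of_sum_Iic_min, prod_const_one]

theorem det_minMatrixSq (N : ℕ) :
    (minMatrixSq N).det = ∏ k ∈ range N, (2 * (k + 1 : ℝ) - 1) := by
  rw [minMatrixSq_eq_sum_Iic_min, det_of_sum_Iic_min,
    Fin.prod_univ_eq_prod_range (fun k => 2 * ((k : ℝ) + 1) - 1)]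

theorem minMatrixSq_det_double_factorial_general (N : ℕ) :
    (minMatrixSq N).det = ∏ k ∈ Finset.range N, (2 * (k + 1 : ℝ) - 1) ∧
    Real.sqrt ((minMatrix N)⁻¹ * minMatrixSq N).det
      = Real.sqrt (∏ k ∈ Finset.range N, (2 * (k + 1 : ℝ) - 1)) := by
  refine ⟨det_minMatrixSq N, ?_⟩
  rw [det_mul, det_nonsing_inv, det_minMatrix, Ring.inverse_one, one_mul, det_minMatrixSq]

/-- **Spectral determinant at γ = 1.** The Hadamard square of the `min(n,m)`
matrix has determinant `∏_{k=1}^N (2k-1) = (2N-1)!!`; equivalently, since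
`det R = 1`, the volume ratio of the Γ-ellipsoid to the Γ₂-ellipsoid is
`(det(R⁻¹R^{∘2}))^{1/2} = ((2N-1)!!)^{1/2}`. -/
theorem minMatrixSq_det_double_factorial (N : ℕ) (hN : 1 ≤ N) :
    (minMatrixSq N).det = ∏ k ∈ Finset.range N, (2 * (k + 1 : ℝ) - 1) ∧
    Real.sqrt ((minMatrix N)⁻¹ * minMatrixSq N).det
      = Real.sqrt (∏ k ∈ Finset.range N, (2 * (k + 1 : ℝ) - 1)) :=
  minMatrixSq_det_double_factorial_general N
end

section
/- Let γ ∈ (0,2), k ∈ ℕ, and let s : Fin k → ℝ with s_i ≥ 0 for all i. Then the k×k matrix with entries Ψ_γ(s_i, s_j) = (1/2)(s_i^γ + s_j^γ − |s_i − s_j|^γ) is positive semidefinite, and its entrywise (Hadamard) square, with entries (Ψ_γ(s_i,s_j))², is also positive semidefinite. Consequently Γ_{γ,2}(f,f) ≥ 0 for every positive-frequency trigonometric polynomial f, i.e. the γ-stable semigroup on the torus satisfies CD(0,∞) on such polynomials. -/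
/-!
For `0 < γ < 2` the Lévy–Khintchine formula `|a| ^ γ = c_γ⁻¹ ∫₀^∞ (1 - cos (a u)) u ^ (-1 - γ) du`
turns `Ψ_γ(a, b)` into `(2 c_γ)⁻¹ ∫₀^∞ ((1 - cos (a u)) (1 - cos (b u)) + sin (a u) sin (b u))
u ^ (-1 - γ) du`, an integral of sums of rank-one positive semidefinite kernels. The Hadamard
square is then positive semidefinite by the Schur product theorem, and `Γ₂(f, f)(x)` is its
Hermitian form at the vector `aₙ e^{i(n+1)x}`.
-/

open MeasureTheory Real Set

noncomputable def levyIntegrand (γ a u : ℝ) : ℝ := (1 - cos (a * u)) * u ^ (-1 - γ)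

noncomputable def stableConst (γ : ℝ) : ℝ := ∫ u in Ioi 0, levyIntegrand γ 1 u

section LevyIntegrand

variable {γ : ℝ}

lemma levyIntegrand_nonneg (γ a : ℝ) {u : ℝ} (hu : 0 ≤ u) : 0 ≤ levyIntegrand γ a u :=
  mul_nonneg (sub_nonneg.2 (cos_le_one _)) (rpow_nonneg hu _)

lemma continuousOn_levyIntegrand (γ a : ℝ) : ContinuousOn (levyIntegrand γ a) (Ioi 0) :=
  (by fun_prop : Continuous fun u => 1 - cos (a * u)).continuousOn.mul
    (continuousOn_id.rpow_const fun _ hu => Or.inl (ne_of_gt hu))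

/-- Near `0` the integrand is `O(u ^ (1 - γ))` because `1 - cos x ≤ x ^ 2 / 2`,
and near `∞` it is `O(u ^ (-1 - γ))` because `1 - cos x ≤ 2`. -/
lemma integrableOn_levyIntegrand (hγ0 : 0 < γ) (hγ2 : γ < 2) (a : ℝ) :
    IntegrableOn (levyIntegrand γ a) (Ioi 0) := by
  have hcont := continuousOn_levyIntegrand γ a
  rw [← Ioo_union_Ici_eq_Ioi zero_lt_one]
  refine IntegrableOn.union ?_ ?_
  · have hdom : IntegrableOn (fun u => a ^ 2 / 2 * u ^ (1 - γ)) (Ioo 0 1) :=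
      ((intervalIntegral.integrableOn_Ioo_rpow_iff zero_lt_one).2 (by linarith)).const_mul _
    refine hdom.mono' ((hcont.mono Ioo_subset_Ioi_self).aestronglyMeasurable measurableSet_Ioo)
      ((ae_restrict_iff' measurableSet_Ioo).2 (Filter.Eventually.of_forall fun u hu => ?_))
    rw [norm_of_nonneg (levyIntegrand_nonneg γ a hu.1.le), levyIntegrand,
      show u ^ (1 - γ) = u ^ (2 : ℝ) * u ^ (-1 - γ) by rw [← rpow_add hu.1]; ring_nf,
      rpow_two, ← mul_assoc]
    gcongr
    · exact rpow_nonneg hu.1.le _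
    · linarith [one_sub_sq_div_two_le_cos (x := a * u), mul_pow a u 2]
  · have hdom : IntegrableOn (fun u : ℝ => 2 * u ^ (-1 - γ)) (Ici 1) := by
      refine Integrable.const_mul ?_ _
      rw [← IntegrableOn, integrableOn_Ici_iff_integrableOn_Ioi,
        integrableOn_Ioi_rpow_iff zero_lt_one]
      linarith
    refine hdom.mono'
      ((hcont.mono fun u (hu : 1 ≤ u) => zero_lt_one.trans_le hu).aestronglyMeasurable
        measurableSet_Ici)
      ((ae_restrict_iff' measurableSet_Ici).2 (Filter.Eventually.of_forall fun u hu => ?_))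
    have hu0 : 0 < u := zero_lt_one.trans_le hu
    rw [norm_of_nonneg (levyIntegrand_nonneg γ a hu0.le), levyIntegrand]
    gcongr
    linarith [neg_one_le_cos (a * u)]

/-- The substitution `u ↦ |a| u`. -/
lemma integral_levyIntegrand (hγ0 : 0 < γ) (a : ℝ) :
    ∫ u in Ioi 0, levyIntegrand γ a u = |a| ^ γ * stableConst γ := by
  rcases eq_or_ne a 0 with rfl | ha
  · simp [levyIntegrand, zero_rpow hγ0.ne']
  have ha' : 0 < |a| := abs_pos.2 ha
  have hscale : ∀ u ∈ Ioi (0 : ℝ),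
      levyIntegrand γ a u = |a| ^ (1 + γ) * levyIntegrand γ 1 (|a| * u) := by
    intro u (hu : 0 < u)
    have hpow : |a| ^ (1 + γ) * |a| ^ (-1 - γ) = 1 := by rw [← rpow_add ha']; norm_num
    rw [levyIntegrand, levyIntegrand, one_mul, mul_rpow ha'.le hu.le, ← cos_abs (a * u),
      abs_mul, abs_of_pos hu]
    linear_combination (-((1 - cos (|a| * u)) * u ^ (-1 - γ))) * hpow
  rw [setIntegral_congr_fun measurableSet_Ioi hscale, integral_const_mul,
    integral_comp_mul_left_Ioi (levyIntegrand γ 1) 0 ha', mul_zero, smul_eq_mul, stableConst,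
    ← mul_assoc, ← rpow_neg_one, ← rpow_add ha']
  ring_nf

lemma stableConst_pos (hγ0 : 0 < γ) (hγ2 : γ < 2) : 0 < stableConst γ := by
  have hint := integrableOn_levyIntegrand hγ0 hγ2 1
  have hsub : Ioc (1 : ℝ) 2 ⊆ Ioi 0 := fun u hu => zero_lt_one.trans hu.1
  have hpos : 0 < ∫ u in (1 : ℝ)..2, levyIntegrand γ 1 u := by
    refine intervalIntegral.intervalIntegral_pos_of_pos_on
      ((intervalIntegrable_iff_integrableOn_Ioc_of_le one_le_two).2 (hint.mono_set hsub))
      (fun u hu => mul_pos ?_ (rpow_pos_of_pos (one_pos.trans hu.1) _)) one_lt_two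
    have := cos_lt_cos_of_nonneg_of_le_pi le_rfl (by linarith [pi_gt_three, hu.2])
      (one_pos.trans hu.1)
    rw [one_mul]
    linarith [cos_zero]
  rw [intervalIntegral.integral_of_le one_le_two] at hpos
  exact hpos.trans_le (setIntegral_mono_set hint
    ((ae_restrict_iff' measurableSet_Ioi).2 (Filter.Eventually.of_forall
      fun u (hu : 0 < u) => levyIntegrand_nonneg γ 1 hu.le)) hsub.eventuallyLE)

noncomputable def levyKernel (γ a b u : ℝ) : ℝ :=
  (levyIntegrand γ a u + levyIntegrand γ b u - levyIntegrand γ (a - b) u) / 2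

lemma levyKernel_eq (γ a b u : ℝ) :
    levyKernel γ a b u =
      ((1 - cos (a * u)) * (1 - cos (b * u)) + sin (a * u) * sin (b * u)) * u ^ (-1 - γ) / 2 := by
  rw [levyKernel, levyIntegrand, levyIntegrand, levyIntegrand, sub_mul a b u, cos_sub]
  ring

lemma integrableOn_levyKernel (hγ0 : 0 < γ) (hγ2 : γ < 2) (a b : ℝ) :
    IntegrableOn (levyKernel γ a b) (Ioi 0) :=
  (((integrableOn_levyIntegrand hγ0 hγ2 a).add (integrableOn_levyIntegrand hγ0 hγ2 b)).sub
    (integrableOn_levyIntegrand hγ0 hγ2 (a - b))).div_const 2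

lemma stableConst_mul_Psi (hγ0 : 0 < γ) (hγ2 : γ < 2) (a b : ℝ) :
    stableConst γ * Psi γ a b = ∫ u in Ioi 0, levyKernel γ a b u := by
  have hint := integrableOn_levyIntegrand hγ0 hγ2
  simp only [levyKernel]
  rw [integral_div, integral_sub (f := fun u => levyIntegrand γ a u + levyIntegrand γ b u)
    ((hint a).add (hint b)) (hint (a - b)),
    integral_add (hint a) (hint b), integral_levyIntegrand hγ0, integral_levyIntegrand hγ0,
    integral_levyIntegrand hγ0, Psi]
  ring

end LevyIntegrand

lemma sum_sum_mul_mul_add_mul {ι : Type*} [Fintype ι] (x A B : ι → ℝ) :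
    ∑ i, ∑ j, x i * x j * (A i * A j + B i * B j) =
      (∑ i, x i * A i) ^ 2 + (∑ i, x i * B i) ^ 2 := by
  simp only [sq, Finset.sum_mul_sum, ← Finset.sum_add_distrib]
  exact Finset.sum_congr rfl fun i _ => Finset.sum_congr rfl fun j _ => by ring

/-- By `levyKernel_eq` the kernel is a sum of two rank-one kernels. -/
lemma sum_sum_levyKernel_nonneg {ι : Type*} [Fintype ι] (γ : ℝ) (s x : ι → ℝ)
    {u : ℝ} (hu : 0 ≤ u) :
    0 ≤ ∑ i, ∑ j, x i * x j * levyKernel γ (s i) (s j) u := by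
  have hsum : ∑ i, ∑ j, x i * x j * levyKernel γ (s i) (s j) u =
      u ^ (-1 - γ) / 2 *
        ((∑ i, x i * (1 - cos (s i * u))) ^ 2 + (∑ i, x i * sin (s i * u)) ^ 2) := by
    rw [← sum_sum_mul_mul_add_mul, Finset.mul_sum]
    refine Finset.sum_congr rfl fun i _ => ?_
    rw [Finset.mul_sum]
    refine Finset.sum_congr rfl fun j _ => ?_
    rw [levyKernel_eq]
    ring
  rw [hsum]
  positivity

lemma Psi_comm (γ a b : ℝ) : Psi γ a b = Psi γ b a := by
  rw [Psi, Psi, abs_sub_comm]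
  ring

namespace Matrix

variable {ι : Type*} [Fintype ι]

lemma posSemidef_iff_sum_sum_nonneg {M : Matrix ι ι ℝ} :
    M.PosSemidef ↔ M.IsHermitian ∧ ∀ x : ι → ℝ, 0 ≤ ∑ i, ∑ j, x i * x j * M i j := by
  have hform : ∀ x : ι → ℝ, star x ⬝ᵥ (M *ᵥ x) = ∑ i, ∑ j, x i * x j * M i j := fun x => by
    simp only [dotProduct, mulVec, star_trivial, Finset.mul_sum]
    exact Finset.sum_congr rfl fun i _ => Finset.sum_congr rfl fun j _ => by ring
  simp only [posSemidef_iff_dotProduct_mulVec, hform]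

/-- The form splits into its values at the real and at the imaginary part of `v`. -/
lemma PosSemidef.re_sum_sum_mul_conj_nonneg {A : Matrix ι ι ℝ} (hA : A.PosSemidef)
    (v : ι → ℂ) : 0 ≤ (∑ i, ∑ j, v i * (starRingEnd ℂ) (v j) * ((A i j : ℝ) : ℂ)).re := by
  have hre : (∑ i, ∑ j, v i * (starRingEnd ℂ) (v j) * ((A i j : ℝ) : ℂ)).re =
      ∑ i, ∑ j, (v i).re * (v j).re * A i j + ∑ i, ∑ j, (v i).im * (v j).im * A i j := by
    simp only [Complex.re_sum, ← Finset.sum_add_distrib]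
    refine Finset.sum_congr rfl fun i _ => Finset.sum_congr rfl fun j _ => ?_
    simp only [Complex.mul_re, Complex.mul_im, Complex.conj_re, Complex.conj_im,
      Complex.ofReal_re, Complex.ofReal_im]
    ring
  have hform := (posSemidef_iff_sum_sum_nonneg.1 hA).2
  rw [hre]
  exact add_nonneg (hform _) (hform _)

end Matrix

open Matrix

noncomputable def psiMatrix {ι : Type*} (γ : ℝ) (s : ι → ℝ) : Matrix ι ι ℝ :=
  of fun i j => Psi γ (s i) (s j)

lemma psiMatrix_posSemidef {ι : Type*} [Fintype ι] {γ : ℝ} (hγ0 : 0 < γ) (hγ2 : γ < 2)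
    (s : ι → ℝ) : (psiMatrix γ s).PosSemidef := by
  refine posSemidef_iff_sum_sum_nonneg.2 ⟨?_, fun x => ?_⟩
  · ext i j
    exact Psi_comm γ (s j) (s i)
  have hint i j := (integrableOn_levyKernel hγ0 hγ2 (s i) (s j)).const_mul (x i * x j)
  have hrep : stableConst γ * ∑ i, ∑ j, x i * x j * psiMatrix γ s i j =
      ∫ u in Ioi 0, ∑ i, ∑ j, x i * x j * levyKernel γ (s i) (s j) u := by
    rw [integral_finsetSum _ fun i _ => integrable_finsetSum _ fun j _ => hint i j,
      Finset.mul_sum]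
    refine Finset.sum_congr rfl fun i _ => ?_
    rw [integral_finsetSum _ fun j _ => hint i j, Finset.mul_sum]
    refine Finset.sum_congr rfl fun j _ => ?_
    rw [integral_const_mul, ← stableConst_mul_Psi hγ0 hγ2, psiMatrix, of_apply]
    ring
  have hnonneg : 0 ≤ ∫ u in Ioi 0, ∑ i, ∑ j, x i * x j * levyKernel γ (s i) (s j) u :=
    setIntegral_nonneg measurableSet_Ioi fun u (hu : 0 < u) =>
      sum_sum_levyKernel_nonneg γ s x hu.le
  exact (mul_nonneg_iff_of_pos_left (stableConst_pos hγ0 hγ2)).1 (hrep ▸ hnonneg)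

lemma Complex.exp_I_mul_sub_mul (t t' x : ℝ) :
    Complex.exp (Complex.I * ((t - t' : ℝ) : ℂ) * x) =
      Complex.exp (Complex.I * t * x) * (starRingEnd ℂ) (Complex.exp (Complex.I * t' * x)) := by
  rw [← Complex.exp_conj, ← Complex.exp_add]
  simp only [map_mul, Complex.conj_I, Complex.conj_ofReal, Complex.ofReal_sub]
  ring_nf

theorem gamma2_nonneg_general (γ : ℝ) (hγ : γ ∈ Set.Ioo (0 : ℝ) 2)
    (k : ℕ) (s : Fin k → ℝ) :
    (∀ v : Fin k → ℂ,
      0 ≤ (∑ i : Fin k, ∑ j : Fin k,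
        v i * (starRingEnd ℂ) (v j) * ((Psi γ (s i) (s j) : ℝ) : ℂ)).re) ∧
    (∀ v : Fin k → ℂ,
      0 ≤ (∑ i : Fin k, ∑ j : Fin k,
        v i * (starRingEnd ℂ) (v j) * ((Psi γ (s i) (s j) : ℝ) : ℂ) ^ 2).re) ∧
    (∀ (N : ℕ) (a : Fin N → ℂ) (x : ℝ),
      0 ≤ (∑ n : Fin N, ∑ m : Fin N,
        a n * (starRingEnd ℂ) (a m) *
          Complex.exp (Complex.I * ((((n : ℕ) + 1 : ℝ) - ((m : ℕ) + 1 : ℝ) : ℝ) : ℂ) * (x : ℂ)) *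
          ((Psi γ ((n : ℕ) + 1) ((m : ℕ) + 1) : ℝ) : ℂ) ^ 2).re) := by
  obtain ⟨hγ0, hγ2⟩ := hγ
  have hsq : ∀ {n : ℕ} (t : Fin n → ℝ) (v : Fin n → ℂ),
      0 ≤ (∑ i, ∑ j, v i * (starRingEnd ℂ) (v j) * ((Psi γ (t i) (t j) : ℝ) : ℂ) ^ 2).re :=
    fun t v => by
      simpa only [hadamard_apply, psiMatrix, of_apply, Complex.ofReal_mul, sq] using
        ((psiMatrix_posSemidef hγ0 hγ2 t).hadamard
          (psiMatrix_posSemidef hγ0 hγ2 t)).re_sum_sum_mul_conj_nonneg v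
  refine ⟨(psiMatrix_posSemidef hγ0 hγ2 s).re_sum_sum_mul_conj_nonneg, hsq s, fun N a x => ?_⟩
  convert hsq (fun n : Fin N => (n : ℝ) + 1)
    (fun n => a n * Complex.exp (Complex.I * ((n : ℝ) + 1 : ℝ) * x)) using 5 with n - m -
  rw [Complex.exp_I_mul_sub_mul, map_mul]
  ring

/-- **Positive semidefiniteness of the carré du champ kernel and its Hadamard
square; CD(0,∞) on positive-frequency polynomials.** For nonnegative arguments
`s : Fin k → ℝ`, the matrix `Ψ_γ(sᵢ,sⱼ)` is positive semidefinite, its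
entrywise square `Ψ_γ(sᵢ,sⱼ)²` is positive semidefinite, and consequently
`Γ_{γ,2}(f,f)(x) ≥ 0` for every positive-frequency trigonometric polynomial
`f = ∑ aₙ e^{inx}`. -/
theorem gamma2_nonneg (γ : ℝ) (hγ : γ ∈ Set.Ioo (0 : ℝ) 2)
    (k : ℕ) (s : Fin k → ℝ) (hs : ∀ i, 0 ≤ s i) :
    (∀ v : Fin k → ℂ,
      0 ≤ (∑ i : Fin k, ∑ j : Fin k,
        v i * (starRingEnd ℂ) (v j) * ((Psi γ (s i) (s j) : ℝ) : ℂ)).re) ∧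
    (∀ v : Fin k → ℂ,
      0 ≤ (∑ i : Fin k, ∑ j : Fin k,
        v i * (starRingEnd ℂ) (v j) * ((Psi γ (s i) (s j) : ℝ) : ℂ) ^ 2).re) ∧
    (∀ (N : ℕ) (a : Fin N → ℂ) (x : ℝ),
      0 ≤ (∑ n : Fin N, ∑ m : Fin N,
        a n * (starRingEnd ℂ) (a m) *
          Complex.exp (Complex.I * ((((n : ℕ) + 1 : ℝ) - ((m : ℕ) + 1 : ℝ) : ℝ) : ℂ) * (x : ℂ)) *
          ((Psi γ ((n : ℕ) + 1) ((m : ℕ) + 1) : ℝ) : ℂ) ^ 2).re) :=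
  gamma2_nonneg_general γ hγ k s
end
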